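/- Work in a monster model of a dependent theory. If the formula φ(x,b) defines a stable set, then there is a formula θ(y) ∈ tp(b/∅) such that the formula φ(x,y) ∧ θ(y) has NOP (does not have the order property). -/

import Mathlib

/-!  Common definitions for formalizing "Unstable structures definable in o-minimal
theories" by Hasson and Onshuus. -/

namespace OMinPaper

open FirstOrder FirstOrder.Language Set Cardinal

universe u v w x





/-! ### Order-theoretic and topological notions on a linear order -/

section Order

variable {M : Type u} [LinearOrder M]

/-- A subset of a linear order which is a single point or an open interval
(endpoints allowed to be `±∞`). -/
def IsPtOrInterval (s : Set M) : Prop :=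
  (∃ a, s = {a}) ∨ (∃ a b, s = Set.Ioo a b) ∨ (∃ a, s = Set.Iio a) ∨
    (∃ a, s = Set.Ioi a) ∨ s = Set.univ

/-- A finite union of points and open intervals. -/
def FinUnionPtsIntervals (s : Set M) : Prop :=
  ∃ F : Set (Set M), F.Finite ∧ (∀ t ∈ F, IsPtOrInterval t) ∧ s = ⋃₀ F

/-- A set of `n`-tuples has an interior point (for the product order topology) iff it
contains a nonempty open box. -/
def HasIntPt {n : ℕ} (Y : Set (Fin n → M)) : Prop :=
  ∃ a b : Fin n → M, (∀ i, a i < b i) ∧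
    {v : Fin n → M | ∀ i, a i < v i ∧ v i < b i} ⊆ Y

/-- `DimGE Y n`: the image of `Y` under some projection onto `n` of the coordinates has
nonempty interior (in the product order topology). -/
def DimGE {ι : Type} (Y : Set (ι → M)) (n : ℕ) : Prop :=
  ∃ σ : Fin n → ι, Function.Injective σ ∧ HasIntPt ((fun w => w ∘ σ) '' Y)

/-- `DimEq Y n`: the (o-minimal) dimension of `Y` equals `n`: `n` is the largest number of
coordinates onto which `Y` projects with nonempty interior. -/
def DimEq {ι : Type} (Y : Set (ι → M)) (n : ℕ) : Prop :=
  DimGE Y n ∧ ∀ m : ℕ, DimGE Y m → m ≤ n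

/-- `e` is in the interior of `s` with respect to the order topology. -/
def InOrdInterior (s : Set M) (e : M) : Prop :=
  (∃ a b, a < e ∧ e < b ∧ Set.Ioo a b ⊆ s) ∨ (∃ b, e < b ∧ Set.Iio b ⊆ s) ∨
    (∃ a, a < e ∧ Set.Ioi a ⊆ s) ∨ s = Set.univ

/-- Closure of a set of tuples in the product of order topologies. -/
def OrdClosure {ι : Type} (S : Set (ι → M)) : Set (ι → M) :=
  letI : TopologicalSpace M := Preorder.topology M
  closure S

/-- Frontier (topological boundary) of a set of tuples in the product of order topologies. -/
def OrdFrontier {ι : Type} (S : Set (ι → M)) : Set (ι → M) :=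
  letI : TopologicalSpace M := Preorder.topology M
  frontier S

end Order





/-! ### First-order logic helpers -/

section Logic

variable {L : FirstOrder.Language.{v, w}} {C : Type u} [L.Structure C]

/-- Satisfaction of a formula `φ(x; y)` with variables split into a parameter block `Fin m`
and a variable block `α`, at the parameter tuple `b` and the variable tuple `v`. -/
def Sat {m : ℕ} {α : Type} (φ : L.Formula (Fin m ⊕ α)) (b : Fin m → C) (v : α → C) : Prop :=
  φ.Realize (Sum.elim b v)

variable (L) in
/-- The tuples `a` and `a'` have the same complete type over the parameter set `A`. -/
def EqTpOn (A : Set C) {α : Type} (a a' : α → C) : Prop :=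
  ∀ (m : ℕ) (φ : L.Formula (Fin m ⊕ α)) (b : Fin m → C), (∀ i, b i ∈ A) →
    (Sat φ b a ↔ Sat φ b a')

/-- The formula `φ(x; y)` (with `x` of sort `α` and `y` of sort `β`) has the order property. -/
def FormulaHasOP {α β : Type} (φ : L.Formula (α ⊕ β)) : Prop :=
  ∃ (a : ℕ → α → C) (b : ℕ → β → C), ∀ i j : ℕ, (φ.Realize (Sum.elim (a i) (b j)) ↔ i < j)

/-- The formula `φ(x; y)` has the independence property. -/
def FormulaHasIP {α β : Type} (φ : L.Formula (α ⊕ β)) : Prop :=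
  ∃ a : ℕ → β → C, ∀ I J : Finset ℕ, Disjoint I J →
    ∃ c : α → C, (∀ i ∈ I, φ.Realize (Sum.elim c (a i))) ∧
      (∀ j ∈ J, ¬ φ.Realize (Sum.elim c (a j)))

variable (L C) in
/-- The (theory of the) structure `C` is dependent (NIP): no formula has the
independence property. -/
def IsDependent : Prop :=
  ∀ (m r : ℕ) (φ : L.Formula (Fin m ⊕ Fin r)), ¬ @FormulaHasIP L C _ _ _ φ

variable (L) in
/-- A set `X` of `α`-tuples is unstable: some formula (with parameters) orders an
infinite sequence of elements of `X` against a sequence of tuples. -/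
def UnstableSet {α : Type} (X : Set (α → C)) : Prop :=
  ∃ (m : ℕ) (φ : L.Formula (α ⊕ Fin m)) (a : ℕ → α → C) (b : ℕ → Fin m → C),
    (∀ i, a i ∈ X) ∧ ∀ i j : ℕ, (φ.Realize (Sum.elim (a i) (b j)) ↔ i < j)

variable (L) in
/-- A subset `X` of the home sort is unstable. -/
def UnstableSet₁ (X : Set C) : Prop :=
  ∃ (m : ℕ) (φ : L.Formula (Fin 1 ⊕ Fin m)) (a : ℕ → C) (b : ℕ → Fin m → C),
    (∀ i, a i ∈ X) ∧ ∀ i j : ℕ, (φ.Realize (Sum.elim (fun _ => a i) (b j)) ↔ i < j)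

variable (L) in
/-- `a` is in the model-theoretic algebraic closure of `A`. -/
def InAcl (A : Set C) (a : C) : Prop :=
  ∃ (m : ℕ) (φ : L.Formula (Fin m ⊕ Fin 1)) (b : Fin m → C), (∀ i, b i ∈ A) ∧
    Sat φ b (fun _ => a) ∧ {x : C | Sat φ b (fun _ : Fin 1 => x)}.Finite

variable (L) in
/-- The tuple `a` is algebraic over the parameter set `A`: it satisfies a formula over `A`
with only finitely many solutions. -/
def TupAlgOver (A : Set C) {α : Type} (a : α → C) : Prop :=
  ∃ (m : ℕ) (φ : L.Formula (Fin m ⊕ α)) (b : Fin m → C), (∀ i, b i ∈ A) ∧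
    Sat φ b a ∧ {v : α → C | Sat φ b v}.Finite

variable (L C) in
/-- The structure eliminates the quantifier `∃^∞`: for each formula there is a bound `K`
such that any instance with more than `K` solutions has infinitely many. -/
def ElimInf : Prop :=
  ∀ (m r : ℕ) (φ : L.Formula (Fin m ⊕ Fin r)), ∃ K : ℕ,
    ∀ b : Fin m → C, {v : Fin r → C | Sat φ b v}.Infinite ∨
      {v : Fin r → C | Sat φ b v}.ncard ≤ K

variable (L C) in
/-- `C` is `κ`-saturated: every finitely satisfiable collection of formulas in one free
variable with parameters from a set of cardinality `< κ` is realized in `C`. -/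
def IsSaturatedIn (κ : Cardinal.{u}) : Prop :=
  ∀ A : Set C, #A < κ →
    ∀ p : Set (Σ m : ℕ, L.Formula (Fin m ⊕ Fin 1) × (Fin m → C)),
      (∀ f ∈ p, ∀ i, f.2.2 i ∈ A) →
      (∀ s ⊆ p, s.Finite → ∃ x : C, ∀ f ∈ s, Sat f.2.1 f.2.2 (fun _ : Fin 1 => x)) →
      ∃ x : C, ∀ f ∈ p, Sat f.2.1 f.2.2 (fun _ : Fin 1 => x)

variable (L C) in
/-- `C` is strongly `κ`-homogeneous: every elementary self-map defined on a set of
cardinality `< κ` extends to an automorphism. -/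
def IsStronglyHomogeneousIn (κ : Cardinal.{u}) : Prop :=
  ∀ A : Set C, #A < κ → ∀ f : C → C,
    (∀ (r : ℕ) (φ : L.Formula (Fin r)) (v : Fin r → C), Set.range v ⊆ A →
      (φ.Realize v ↔ φ.Realize (f ∘ v))) →
    ∃ σ : C ≃[L] C, ∀ x ∈ A, σ x = f x

variable (L C) in
/-- `C` is a monster model: saturated and strongly homogeneous in its own cardinality. -/
def IsMonster : Prop :=
  IsSaturatedIn L C #C ∧ IsStronglyHomogeneousIn L C #C

variable (L) in
/-- A map between two `L`-structures is elementary. -/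
def IsElemMap {N : Type u} [L.Structure N] (g : C → N) : Prop :=
  ∀ (r : ℕ) (φ : L.Formula (Fin r)) (v : Fin r → C), (φ.Realize v ↔ φ.Realize (g ∘ v))

end Logic

/-! ### Types as sets of formulas with parameters -/

variable (L : FirstOrder.Language.{v, w}) (C : Type u) in
/-- A formula in `r` free variables with a tuple of parameters from `C`. -/
def FP (r : ℕ) : Type _ :=
  Σ m : ℕ, L.Formula (Fin m ⊕ Fin r) × (Fin m → C)

section Types

variable {L : FirstOrder.Language.{v, w}} {C : Type u} [L.Structure C] {r : ℕ}

/-- The tuple `v` realizes the formula-with-parameters `f`. -/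
def RealizesFP (f : FP L C r) (v : Fin r → C) : Prop :=
  Sat f.2.1 f.2.2 v

/-- All parameters of all formulas in `p` lie in `A`. -/
def ParamsIn (A : Set C) (p : Set (FP L C r)) : Prop :=
  ∀ f ∈ p, ∀ i, f.2.2 i ∈ A

/-- `p` is finitely satisfiable (in `C`). -/
def FinitelySat (p : Set (FP L C r)) : Prop :=
  ∀ s ⊆ p, s.Finite → ∃ v : Fin r → C, ∀ f ∈ s, RealizesFP f v

/-- `p` is a complete type over the parameter set `A` (consistency being witnessed by finite
satisfiability in the model). -/
def CompleteOver (A : Set C) (p : Set (FP L C r)) : Prop :=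
  ParamsIn A p ∧ FinitelySat p ∧
    ∀ (m : ℕ) (φ : L.Formula (Fin m ⊕ Fin r)) (b : Fin m → C), (∀ i, b i ∈ A) →
      ((⟨m, φ, b⟩ : FP L C r) ∈ p ∨ (⟨m, φ.not, b⟩ : FP L C r) ∈ p)

end Types

/-! ### O-minimality -/

variable (L : FirstOrder.Language.{v, w}) (M : Type u) [L.Structure M] [LinearOrder M] in
/-- `M` is an o-minimal `L`-structure: the underlying order is dense, definable, and every
definable subset of `M` (with parameters) is a finite union of points and open intervals. -/
def IsOMinimal : Prop :=
  DenselyOrdered M ∧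
    Set.Definable (∅ : Set M) L {v : Fin 2 → M | v 0 < v 1} ∧
    ∀ s : Set M, Set.Definable₁ (Set.univ : Set M) L s → FinUnionPtsIntervals s

section OMin

variable {L : FirstOrder.Language.{v, w}} {M : Type u} [L.Structure M] [LinearOrder M]

variable (L) (M) in
/-- `M` eliminates imaginaries: every definable equivalence relation on a power of `M` is the
kernel of a definable map into a power of `M`. -/
def ElimImaginaries : Prop :=
  ∀ (k : ℕ) (E : (Fin k → M) → (Fin k → M) → Prop),
    Set.Definable (Set.univ : Set M) L
      {v : Fin 2 × Fin k → M | E (fun j => v (0, j)) (fun j => v (1, j))} →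
    (∀ x, E x x) → (∀ x y, E x y → E y x) → (∀ x y z, E x y → E y z → E x z) →
    ∃ (m : ℕ) (f : (Fin k → M) → (Fin m → M)),
      Set.Definable (Set.univ : Set M) L
        {v : Fin k ⊕ Fin m → M | f (fun j => v (Sum.inl j)) = fun j => v (Sum.inr j)} ∧
      ∀ x y, (E x y ↔ f x = f y)

variable (L) in
/-- `TupDimEq a A n` : the dimension of `tp_M(a/A)` is `n`, i.e. `n` is the minimum of the
dimensions of the `A`-definable sets to which `a` belongs. -/
def TupDimEq {ι : Type} (a : ι → M) (A : Set M) (n : ℕ) : Prop :=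
  (∃ Y : Set (ι → M), Set.Definable A L Y ∧ a ∈ Y ∧ DimEq Y n) ∧
    ∀ (Y : Set (ι → M)) (m : ℕ), Set.Definable A L Y → a ∈ Y → DimEq Y m → n ≤ m

variable (L) in
/-- `a` is a generic point of `Y` over `A`: `a ∈ Y` and `dim(a/A) = dim Y`. -/
def GenericIn {ι : Type} (a : ι → M) (Y : Set (ι → M)) (A : Set M) : Prop :=
  a ∈ Y ∧ ∃ n : ℕ, DimEq Y n ∧ TupDimEq L a A n

end OMin

/-! ### Quasi-orders and o-minimal quotients -/

section Quasi

variable {P : Type u}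

/-- The strict relation associated with a quasi order. -/
def QuasiLT (r : P → P → Prop) (x y : P) : Prop := r x y ∧ ¬ r y x

/-- `t` is (inside `X`) a class of the equivalence associated with the total quasi order `r`,
or an interval of the induced linear order on the quotient. -/
def IsClassOrIntervalIn (X : Set P) (r : P → P → Prop) (t : Set P) : Prop :=
  (∃ a ∈ X, t = {y ∈ X | r a y ∧ r y a}) ∨
    (∃ a ∈ X, ∃ b ∈ X, t = {y ∈ X | QuasiLT r a y ∧ QuasiLT r y b}) ∨
    (∃ a ∈ X, t = {y ∈ X | QuasiLT r y a}) ∨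
    (∃ a ∈ X, t = {y ∈ X | QuasiLT r a y}) ∨ t = X

/-- `S` is a finite union of classes and intervals of the quotient linear order. -/
def FinUnionClassesIntervals (X : Set P) (r : P → P → Prop) (S : Set P) : Prop :=
  ∃ F : Set (Set P), F.Finite ∧ (∀ t ∈ F, IsClassOrIntervalIn X r t) ∧ S = ⋃₀ F

/-- `r` is a total quasi order on `X` (so that it induces a linear order on the quotient
of `X` by the equivalence relation `r x y ∧ r y x`). -/
def IsTotalQuasiOrderOn (X : Set P) (r : P → P → Prop) : Prop :=
  (∀ x ∈ X, r x x) ∧ (∀ x ∈ X, ∀ y ∈ X, ∀ z ∈ X, r x y → r y z → r x z) ∧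
    (∀ x ∈ X, ∀ y ∈ X, r x y ∨ r y x)

/-- The quotient of `X` by the equivalence associated to `r` is infinite. -/
def InfiniteQuotient (X : Set P) (r : P → P → Prop) : Prop :=
  ∃ a : ℕ → P, (∀ i, a i ∈ X) ∧ ∀ i j : ℕ, i ≠ j → ¬ (r (a i) (a j) ∧ r (a j) (a i))

/-- The linear order induced by `r` on the quotient of `X` is dense. -/
def DenseQuotient (X : Set P) (r : P → P → Prop) : Prop :=
  ∀ x ∈ X, ∀ y ∈ X, QuasiLT r x y → ∃ z ∈ X, QuasiLT r x z ∧ QuasiLT r z y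

end Quasi

section FinByOMin

variable (L : FirstOrder.Language.{v, w}) (N : Type u) [L.Structure N]

/-- `X` is finite by o-minimal: there is a definable equivalence relation on `X` with finite
classes and a definable linear order on the quotient (presented as a definable total quasi
order `r` on `X`) such that every definable subset of the quotient (i.e. every definable
invariant subset of `X`) is a finite union of points and intervals. -/
def FinByOMinimal (X : Set N) : Prop :=
  ∃ r : N → N → Prop,
    Set.Definable (Set.univ : Set N) L {v : Fin 2 → N | r (v 0) (v 1)} ∧
    IsTotalQuasiOrderOn X r ∧
    (∀ x ∈ X, {y ∈ X | r x y ∧ r y x}.Finite) ∧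
    ∀ S : Set N, S ⊆ X → Set.Definable₁ (Set.univ : Set N) L S →
      (∀ x ∈ S, ∀ y ∈ X, r x y → r y x → y ∈ S) → FinUnionClassesIntervals X r S

/-- `N` interprets an infinite o-minimal structure: the quotient of a definable set `D` of
tuples by a definable equivalence relation, equipped with a definable dense linear order,
such that every definable subset of the quotient is a finite union of points and intervals. -/
def InterpretsOMinimalSet : Prop :=
  ∃ (k : ℕ) (D : Set (Fin k → N)) (r : (Fin k → N) → (Fin k → N) → Prop),
    Set.Definable (Set.univ : Set N) L D ∧
    Set.Definable (Set.univ : Set N) L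
      {v : Fin 2 × Fin k → N | r (fun j => v (0, j)) (fun j => v (1, j))} ∧
    IsTotalQuasiOrderOn D r ∧ InfiniteQuotient D r ∧ DenseQuotient D r ∧
    ∀ S : Set (Fin k → N), S ⊆ D → Set.Definable (Set.univ : Set N) L S →
      (∀ x ∈ S, ∀ y ∈ D, r x y → r y x → y ∈ S) → FinUnionClassesIntervals D r S

end FinByOMin





/-! ### Structures definable or interpretable in another structure -/

section Interp

variable (L : FirstOrder.Language.{v, w}) (M : Type u) [L.Structure M]
variable (L' : FirstOrder.Language.{x, x})

/-- The `L'`-structure on the subtype `↥D` (for `D` an `M`-definable set of `k`-tuples) is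
definable in `M` over the parameter set `A`: the domain, all primitive relations and the
graphs of all primitive functions are `A`-definable in `M`. -/
def StructureDefinableInOver {k : ℕ} (D : Set (Fin k → M)) [L'.Structure ↥D] (A : Set M) : Prop :=
  Set.Definable A L D ∧
    (∀ (n : ℕ) (R : L'.Relations n), Set.Definable A L
      {v : Fin n × Fin k → M | ∃ w : Fin n → ↥D,
        (∀ i, ((w i : Fin k → M)) = fun j => v (i, j)) ∧ Structure.RelMap R w}) ∧
    (∀ (n : ℕ) (f : L'.Functions n), Set.Definable A L
      {v : (Fin n ⊕ Unit) × Fin k → M | ∃ (w : Fin n → ↥D) (z : ↥D),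
        (∀ i, ((w i : Fin k → M)) = fun j => v (Sum.inl i, j)) ∧
        ((z : Fin k → M) = fun j => v (Sum.inr (), j)) ∧ Structure.funMap f w = z})

/-- The `L'`-structure on `↥D` is definable (with parameters) in `M`. -/
def StructureDefinableIn {k : ℕ} (D : Set (Fin k → M)) [L'.Structure ↥D] : Prop :=
  StructureDefinableInOver L M L' D (Set.univ : Set M)

/-- The `L'`-structure `N` is interpretable in `M` via the definable set `S ⊆ M^k` and the
map `π` (which is surjective onto `N` from `S` and whose fiber equivalence relation on `S`
is definable): all primitive relations and graphs of primitive functions of `N` pull back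
to definable sets. -/
def StructureInterpretableVia (N : Type x) [L'.Structure N] {k : ℕ}
    (S : Set (Fin k → M)) (π : (Fin k → M) → N) : Prop :=
  Set.Definable (Set.univ : Set M) L S ∧
    (∀ y : N, ∃ v ∈ S, π v = y) ∧
    Set.Definable (Set.univ : Set M) L
      {v : Fin 2 × Fin k → M | (fun j => v (0, j)) ∈ S ∧ (fun j => v (1, j)) ∈ S ∧
        π (fun j => v (0, j)) = π (fun j => v (1, j))} ∧
    (∀ (n : ℕ) (R : L'.Relations n), Set.Definable (Set.univ : Set M) L
      {v : Fin n × Fin k → M | (∀ i, (fun j => v (i, j)) ∈ S) ∧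
        Structure.RelMap R (fun i => π (fun j => v (i, j)))}) ∧
    (∀ (n : ℕ) (f : L'.Functions n), Set.Definable (Set.univ : Set M) L
      {v : (Fin n ⊕ Unit) × Fin k → M | (∀ i, (fun j => v (Sum.inl i, j)) ∈ S) ∧
        (fun j => v (Sum.inr (), j)) ∈ S ∧
        π (fun j => v (Sum.inr (), j)) =
          Structure.funMap f (fun i => π (fun j => v (Sum.inl i, j)))})

end Interp

/-! ### The language of one binary relation -/

/-- The `Language.order`-structure on `P` in which the relation symbol is interpreted
by an arbitrary binary relation `r`. -/
def relStr {P : Type u} (r : P → P → Prop) : Language.order.Structure P :=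
  @orderStructure P ⟨r⟩

/-- The structures `(P, r₁)` and `(P, r₂)` (in the language of one binary relation) are
elementarily equivalent. -/
def ElemEquivRel {P : Type u} (r₁ r₂ : P → P → Prop) : Prop :=
  ∀ φ : Language.order.Sentence,
    (@Sentence.Realize _ P (relStr r₁) φ ↔ @Sentence.Realize _ P (relStr r₂) φ)

/-- A subset `s` of `P` is definable (with parameters from `A`) in the structure `(P, r)`
with one binary relation `r`. -/
def DefinableInRel {P : Type u} (r : P → P → Prop) (A : Set P) (s : Set P) : Prop :=
  @Set.Definable₁ P A Language.order (relStr r) s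

/-- A set of `α`-tuples of `P` is definable (with parameters from `A`) in `(P, r)`. -/
def DefinableInRel' {P : Type u} (r : P → P → Prop) (A : Set P) {α : Type}
    (s : Set (α → P)) : Prop :=
  @Set.Definable P A Language.order (relStr r) α s

/-! ### Dividing, forking and U-rank -/

section Forking

variable (L : FirstOrder.Language.{v, w}) {C : Type u} [L.Structure C]

/-- The sequence of `β`-tuples `bs` is indiscernible over the parameter set `A`. -/
def IndiscOver (A : Set C) {β : Type} (bs : ℕ → β → C) : Prop :=
  ∀ (q : ℕ) (i j : Fin q → ℕ), StrictMono i → StrictMono j →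
    EqTpOn L A (fun p : Fin q × β => bs (i p.1) p.2) (fun p : Fin q × β => bs (j p.1) p.2)

variable {L} in
/-- The family of instances `φ(x; bs i)` is `k`-inconsistent. -/
def KInconsistent {m : ℕ} {α : Type} (φ : L.Formula (Fin m ⊕ α)) (bs : ℕ → Fin m → C)
    (k : ℕ) : Prop :=
  ∀ s : Fin k → ℕ, Function.Injective s → ¬ ∃ v : α → C, ∀ j, Sat φ (bs (s j)) v

variable {L} in
/-- The formula `φ(x; b)` divides over `A`. -/
def FDivides {m : ℕ} {α : Type} (φ : L.Formula (Fin m ⊕ α)) (b : Fin m → C)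
    (A : Set C) : Prop :=
  ∃ (k : ℕ) (bs : ℕ → Fin m → C), bs 0 = b ∧ IndiscOver L A bs ∧ KInconsistent φ bs k

variable {L} in
/-- The formula `φ(x; b)` forks over `A`: it implies a finite disjunction of formulas
each dividing over `A`. -/
def FForks {m : ℕ} {α : Type} (φ : L.Formula (Fin m ⊕ α)) (b : Fin m → C)
    (A : Set C) : Prop :=
  ∃ (t : ℕ) (ms : Fin t → ℕ) (ψ : ∀ i, L.Formula (Fin (ms i) ⊕ α)) (d : ∀ i, Fin (ms i) → C),
    (∀ i, FDivides (ψ i) (d i) A) ∧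
    ∀ v : α → C, Sat φ b v → ∃ i, Sat (ψ i) (d i) v

/-- The complete type `tp(a/B)` forks over `A`. -/
def TpForks {α : Type} (a : α → C) (B A : Set C) : Prop :=
  ∃ (m : ℕ) (φ : L.Formula (Fin m ⊕ α)) (b : Fin m → C),
    (∀ i, b i ∈ B) ∧ Sat φ b a ∧ FForks φ b A

/-- `URankGE L a A o` : the U-rank (the foundation rank of forking) of the complete type
`tp(a/A)` is at least `o`. -/
def URankGE {α : Type} (a : α → C) (A : Set C) (o : Ordinal.{u}) : Prop :=
  WellFounded.fix wellFounded_lt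
    (fun (o : Ordinal.{u}) (IH : ∀ o' < o, (α → C) → Set C → Prop) (a : α → C) (A : Set C) =>
      ∀ o' (h : o' < o), ∃ (B : Set C) (a' : α → C), A ⊆ B ∧ EqTpOn L A a a' ∧
        TpForks L a' B A ∧ IH o' h a' B)
    o a A

variable {L} in
/-- The formula `φ(x; b)` strongly divides over `A`: `tp(b/A)` is non-algebraic and the set
of instances of `φ` at realizations of `tp(b/A)` is `k`-inconsistent for some `k`. -/
def StronglyDivides {m : ℕ} {α : Type} (φ : L.Formula (Fin m ⊕ α)) (b : Fin m → C)
    (A : Set C) : Prop :=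
  {b' : Fin m → C | EqTpOn L A b b'}.Infinite ∧
    ∃ k : ℕ, ∀ bs : Fin k → Fin m → C, (∀ j, EqTpOn L A b (bs j)) → Function.Injective bs →
      ¬ ∃ v : α → C, ∀ j, Sat φ (bs j) v

variable {L} in
/-- The formula `φ(x; b)` þ-divides over `A` : it strongly divides over `A ∪ c`
for some tuple `c`. -/
def ThornDivides {m : ℕ} {α : Type} (φ : L.Formula (Fin m ⊕ α)) (b : Fin m → C)
    (A : Set C) : Prop :=
  ∃ (t : ℕ) (c : Fin t → C), StronglyDivides φ b (A ∪ Set.range c)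

variable {L} in
/-- The formula `φ(x; b)` þ-forks over `A`. -/
def ThornForks {m : ℕ} {α : Type} (φ : L.Formula (Fin m ⊕ α)) (b : Fin m → C)
    (A : Set C) : Prop :=
  ∃ (t : ℕ) (ms : Fin t → ℕ) (ψ : ∀ i, L.Formula (Fin (ms i) ⊕ α)) (d : ∀ i, Fin (ms i) → C),
    (∀ i, ThornDivides (ψ i) (d i) A) ∧
    ∀ v : α → C, Sat φ b v → ∃ i, Sat (ψ i) (d i) v

/-- The complete type `tp(a/B)` þ-forks over `A`. -/
def TpThornForks {α : Type} (a : α → C) (B A : Set C) : Prop :=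
  ∃ (m : ℕ) (φ : L.Formula (Fin m ⊕ α)) (b : Fin m → C),
    (∀ i, b i ∈ B) ∧ Sat φ b a ∧ ThornForks φ b A

/-- `UThornRankGE L a A o` : the `U^þ`-rank (the foundation rank of þ-forking) of the
complete type `tp(a/A)` is at least `o`. -/
def UThornRankGE {α : Type} (a : α → C) (A : Set C) (o : Ordinal.{u}) : Prop :=
  WellFounded.fix wellFounded_lt
    (fun (o : Ordinal.{u}) (IH : ∀ o' < o, (α → C) → Set C → Prop) (a : α → C) (A : Set C) =>
      ∀ o' (h : o' < o), ∃ (B : Set C) (a' : α → C), A ⊆ B ∧ EqTpOn L A a a' ∧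
        TpThornForks L a' B A ∧ IH o' h a' B)
    o a A

variable {L} in
/-- `ThornRankGE φ b o` : the þ-rank of the formula `φ(x; b)` is at least `o`. -/
def ThornRankGE {α : Type} {m : ℕ} (φ : L.Formula (Fin m ⊕ α)) (b : Fin m → C)
    (o : Ordinal.{u}) : Prop :=
  WellFounded.fix wellFounded_lt
    (fun (o : Ordinal.{u})
        (IH : ∀ o' < o, ∀ m' : ℕ, L.Formula (Fin m' ⊕ α) → (Fin m' → C) → Prop)
        (m : ℕ) (φ : L.Formula (Fin m ⊕ α)) (b : Fin m → C) =>
      ∀ o' (h : o' < o), ∃ (m' : ℕ) (ψ : L.Formula (Fin m' ⊕ α)) (c : Fin m' → C),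
        (∀ v : α → C, Sat ψ c v → Sat φ b v) ∧ ThornDivides ψ c (Set.range b) ∧
          IH o' h m' ψ c)
    o m φ b

end Forking


/-! ### Lifting sets from an interpreted structure back to the ambient structure -/

section Lift

variable {M : Type u} {k : ℕ} {D : Set (Fin k → M)}

/-- The subset of `M^k` corresponding to a set of elements of `↥D`. -/
def liftSet1 (X : Set ↥D) : Set (Fin k → M) :=
  (fun x : ↥D => (x : Fin k → M)) '' X

/-- The subset of `M^{2k}` corresponding to a binary relation on `↥D`. -/
def liftRel (ρ : ↥D → ↥D → Prop) : Set (Fin 2 × Fin k → M) :=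
  {v | ∃ x y : ↥D, ((x : Fin k → M) = fun j => v (0, j)) ∧
    ((y : Fin k → M) = fun j => v (1, j)) ∧ ρ x y}

/-- The subset of `M^{r·k}` corresponding to a set of `r`-tuples of elements of `↥D`. -/
def liftSetR {r : ℕ} (X : Set (Fin r → ↥D)) : Set (Fin r × Fin k → M) :=
  {v | ∃ w : Fin r → ↥D, (∀ i, ((w i : Fin k → M) = fun j => v (i, j))) ∧ w ∈ X}

end Lift

/-! ### Strongly stable types -/

/-- A complete type `q` (over a set of parameters of the model `N`) is strongly stable:
in no elementary extension of `N` is there a formula defining a quasi order with an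
infinite chain of realizations of a common extension of `q`. -/
def StronglyStable (L' : FirstOrder.Language.{x, x}) (N : Type u) [L'.Structure N]
    (q : Set (FP L' N 1)) : Prop :=
  ∀ (N' : Type u) [L'.Structure N'] (g : N → N'), IsElemMap L' g →
    ∀ (m : ℕ) (φ : L'.Formula (Fin m ⊕ Fin 2)) (c : Fin m → N') (a : ℕ → N'),
      -- every `a i` realizes (the image of) `q` ...
      (∀ i : ℕ, ∀ f ∈ q, Sat f.2.1 (g ∘ f.2.2) (fun _ : Fin 1 => a i)) →
      -- ... and they all realize a common complete type `p' ⊇ q` over the larger parameter set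
      (∀ i j : ℕ, EqTpOn L' (Set.range g ∪ Set.range c)
        (fun _ : Fin 1 => a i) (fun _ : Fin 1 => a j)) →
      -- if `φ(x, y; c)` is a quasi order (transitive), ...
      (∀ x y z : N', Sat φ c ![x, y] → Sat φ c ![y, z] → Sat φ c ![x, z]) →
      -- ... then the `a i` do not form an infinite strictly increasing `φ`-chain
      ¬ ∀ i j : ℕ, i < j → Sat φ c ![a i, a j] ∧ ¬ Sat φ c ![a j, a i]

end OMinPaper
open OMinPaper FirstOrder FirstOrder.Language Set Cardinal

universe u v w

/-!
Suppose that every `θ ∈ tp(b/∅)` leaves `φ(x, y) ∧ θ(y)` with the order property. Call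
`x₀, …, x_{n-1} ∈ φ(C, y)` together with `y₀, …, y_{n-1}` a ladder of length `n` over `y` when
`φ(xᵢ, yⱼ) ↔ j ≤ i`, and let `χₙ(y)` say that there is one. If `b` failed `χₙ`, then
`φ(x, y) ∧ ¬χₙ(y)` would have the order property, and reading a witness `(uₖ, vₗ)` backwards
gives a ladder of length `n` over `v_{n+1}`, although `¬χₙ(v_{n+1})`. So `b` satisfies every
`χₙ`, and saturation (compactness in countably many variables over the finitely many relevant
coordinates of `b`) produces an infinite ladder inside `φ(C, b)`: `¬φ` orders it, so `φ(C, b)` is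
unstable. Since only the free variables of `φ` matter, both variable sorts may be taken finite.
-/

namespace OMinPaper

section FreeVariables

variable {L : Language} {M : Type*} [L.Structure M] {α β : Type*}

theorem realize_iff_of_eqOn_freeVarFinset [DecidableEq α] {φ : L.Formula α} {v w : α → M}
    (h : ∀ a ∈ φ.freeVarFinset, v a = w a) : φ.Realize v ↔ φ.Realize w :=
  (BoundedFormula.realize_restrictFreeVar (f := Subtype.val) v fun _ => rfl).symm.trans
    (BoundedFormula.realize_restrictFreeVar w fun a => h a a.2)

def splitSumFinset (u : Finset (α ⊕ β)) : u → u.toLeft ⊕ u.toRight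
  | ⟨.inl a, h⟩ => .inl ⟨a, Finset.mem_toLeft.2 h⟩
  | ⟨.inr b, h⟩ => .inr ⟨b, Finset.mem_toRight.2 h⟩

def restrictFreeVarSum [DecidableEq α] [DecidableEq β] (φ : L.Formula (α ⊕ β)) :
    L.Formula (φ.freeVarFinset.toLeft ⊕ φ.freeVarFinset.toRight) :=
  φ.restrictFreeVar (splitSumFinset φ.freeVarFinset)

theorem realize_restrictFreeVarSum [DecidableEq α] [DecidableEq β] (φ : L.Formula (α ⊕ β))
    (v : α → M) (w : β → M) :
    (restrictFreeVarSum φ).Realize (Sum.elim (v ∘ (↑)) (w ∘ (↑))) ↔ φ.Realize (Sum.elim v w) :=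
  BoundedFormula.realize_restrictFreeVar _ (by rintro ⟨a | b, h⟩ <;> rfl)

/-- The right-hand block of variables may be infinite: only its free variables are quantified. -/
noncomputable def exClosureRight [DecidableEq α] [DecidableEq β] (φ : L.Formula (α ⊕ β)) :
    L.Formula α :=
  ((restrictFreeVarSum φ).relabel (Sum.map (↑) id)).iExs _

theorem realize_exClosureRight [Nonempty M] [DecidableEq α] [DecidableEq β]
    (φ : L.Formula (α ⊕ β)) (v : α → M) :
    (exClosureRight φ).Realize v ↔ ∃ e : β → M, φ.Realize (Sum.elim v e) := by
  simp only [exClosureRight, Formula.realize_iExs, Formula.realize_relabel, Sum.elim_comp_map,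
    Function.comp_id]
  constructor
  · rintro ⟨w, hw⟩
    refine ⟨Function.extend (↑) w fun _ => Classical.arbitrary M, ?_⟩
    rwa [← realize_restrictFreeVarSum, Function.extend_comp Subtype.val_injective]
  · rintro ⟨e, he⟩
    exact ⟨e ∘ (↑), (realize_restrictFreeVarSum φ v e).2 he⟩

end FreeVariables

theorem exists_formula_realize_iff_exists_extension {L : Language} {C : Type*}
    [L.Structure C] [Nonempty C] {δ ι : Type*} (q : δ → C) (F : ι → L.Formula (δ ⊕ ℕ)) (n : ℕ)
    (e : ℕ → C) (t : Finset ι) :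
    ∃ ξ : L.Formula ((δ ⊕ Fin n) ⊕ Fin 1), ∀ x,
      ξ.Realize (Sum.elim (Sum.elim q fun i : Fin n => e i) fun _ => x) ↔
        ∃ e' : ℕ → C, (∀ i < n, e' i = e i) ∧ e' n = x ∧ ∀ k ∈ t, (F k).Realize (Sum.elim q e') := by
  classical
  let ρ : δ ⊕ ℕ → ((δ ⊕ Fin n) ⊕ Fin 1) ⊕ ℕ := Sum.elim (fun d => .inl (.inl (.inl d)))
    fun i => if h : i < n then .inl (.inl (.inr ⟨i, h⟩)) else if i = n then .inl (.inr 0)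
      else .inr i
  let merge : C → (ℕ → C) → ℕ → C := fun x e' i =>
    if i < n then e i else if i = n then x else e' i
  have hρ : ∀ x e', Sum.elim (Sum.elim (Sum.elim q fun i : Fin n => e i) fun _ => x) e' ∘ ρ =
      Sum.elim q (merge x e') := by
    intro x e'
    ext (d | i)
    · rfl
    · simp only [ρ, merge, Function.comp_apply, Sum.elim_inr]
      split_ifs <;> rfl
  refine ⟨exClosureRight ((Formula.iInf fun k : t => F k).relabel ρ), fun x => ?_⟩
  simp only [realize_exClosureRight, Formula.realize_relabel, hρ, Formula.realize_iInf]
  constructor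
  · rintro ⟨e', he'⟩
    exact ⟨merge x e', fun i hi => by simp [merge, hi], by simp [merge], fun k hk => he' ⟨k, hk⟩⟩
  · rintro ⟨e', he', rfl, hre'⟩
    have : merge (e' n) e' = e' := by
      funext i
      simp only [merge]
      split_ifs with h1 h2
      · exact (he' i h1).symm
      · rw [h2]
      · rfl
    exact ⟨e', fun k => by rw [this]; exact hre' k k.2⟩

def FinitelyExtendable {L : Language} {C : Type*} [L.Structure C] {δ ι : Type*} (q : δ → C)
    (F : ι → L.Formula (δ ⊕ ℕ)) (n : ℕ) (e : ℕ → C) : Prop :=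
  ∀ t : Finset ι, ∃ e' : ℕ → C, (∀ i < n, e' i = e i) ∧ ∀ k ∈ t, (F k).Realize (Sum.elim q e')

namespace IsSaturatedIn

variable {L : Language} {C : Type u} [L.Structure C] [Infinite C]
  (hsat : IsSaturatedIn L C #C) {δ ι : Type*} [Finite δ] (q : δ → C)
include hsat

theorem exists_forall_realize (ξ : ι → L.Formula (δ ⊕ Fin 1))
    (hξ : ∀ t : Finset ι, ∃ x : C, ∀ i ∈ t, (ξ i).Realize (Sum.elim q fun _ => x)) :
    ∃ x : C, ∀ i, (ξ i).Realize (Sum.elim q fun _ => x) := by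
  classical
  obtain ⟨m, ⟨e⟩⟩ := Finite.exists_equiv_fin δ
  let enc : ι → Σ m : ℕ, L.Formula (Fin m ⊕ Fin 1) × (Fin m → C) :=
    fun i => ⟨m, (ξ i).relabel (Sum.map e id), q ∘ e.symm⟩
  have henc : ∀ i x, Sat (enc i).2.1 (enc i).2.2 (fun _ => x) ↔
      (ξ i).Realize (Sum.elim q fun _ => x) := by
    intro i x
    simp only [enc, Sat, Formula.realize_relabel, Sum.elim_comp_map, Function.comp_assoc,
      Equiv.symm_comp_self, Function.comp_id]
  have hcard : #(range q) < #C :=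
    (finite_range q).lt_aleph0.trans_le (aleph0_le_mk C)
  obtain ⟨x, hx⟩ := hsat (range q) hcard (range enc) (by rintro _ ⟨i, rfl⟩ k; exact ⟨_, rfl⟩)
    (by
      intro s hs hfin
      obtain ⟨t, -, ht⟩ := Finset.subset_set_image_iff.1
        (show ↑hfin.toFinset ⊆ enc '' univ by simpa using hs)
      obtain ⟨x, hx⟩ := hξ t
      refine ⟨x, fun f hf => ?_⟩
      obtain ⟨i, hi, rfl⟩ := Finset.mem_image.1 (ht ▸ hfin.mem_toFinset.2 hf)
      exact (henc i x).2 (hx i hi))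
  exact ⟨x, fun i => (henc i x).1 (hx _ ⟨i, rfl⟩)⟩

theorem exists_finitelyExtendable_update (F : ι → L.Formula (δ ⊕ ℕ)) {n : ℕ} {e : ℕ → C}
    (h : FinitelyExtendable q F n e) :
    ∃ x, FinitelyExtendable q F (n + 1) (Function.update e n x) := by
  classical
  choose ξ hξ using exists_formula_realize_iff_exists_extension q F n e
  obtain ⟨x, hx⟩ := hsat.exists_forall_realize (Sum.elim q fun i : Fin n => e i) ξ fun T => by
    obtain ⟨e', he', hre'⟩ := h (T.sup id)
    exact ⟨e' n, fun t ht => (hξ t _).2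
      ⟨e', he', rfl, fun k hk => hre' k (Finset.mem_sup.2 ⟨t, ht, hk⟩)⟩⟩
  refine ⟨x, fun t => ?_⟩
  obtain ⟨e', he', rfl, hre'⟩ := (hξ t x).1 (hx t)
  refine ⟨e', fun i hi => ?_, hre'⟩
  rcases Nat.lt_succ_iff_lt_or_eq.1 hi with hi | rfl
  · rw [Function.update_of_ne hi.ne, he' i hi]
  · rw [Function.update_self]

theorem exists_forall_realize_nat (F : ι → L.Formula (δ ⊕ ℕ))
    (hF : ∀ t : Finset ι, ∃ e : ℕ → C, ∀ k ∈ t, (F k).Realize (Sum.elim q e)) :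
    ∃ e : ℕ → C, ∀ k, (F k).Realize (Sum.elim q e) := by
  classical
  choose! g hg using fun n e (h : FinitelyExtendable q F n e) =>
    hsat.exists_finitelyExtendable_update q F h
  let E : ℕ → ℕ → C := fun n =>
    Nat.rec (fun _ => Classical.arbitrary C) (fun n E => Function.update E n (g n E)) n
  have hE : ∀ n, FinitelyExtendable q F n (E n) := by
    intro n
    induction n with
    | zero => exact fun t => (hF t).imp fun e he => ⟨by simp, he⟩
    | succ n ih => exact hg n (E n) ih
  have hE_eq : ∀ n, ∀ i < n, E n i = E (i + 1) i := by
    intro n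
    induction n with
    | zero => simp
    | succ n ih =>
      intro i hi
      rcases Nat.lt_succ_iff_lt_or_eq.1 hi with hi | rfl
      · exact (Function.update_of_ne hi.ne _ _).trans (ih i hi)
      · rfl
  refine ⟨fun i => E (i + 1) i, fun k => ?_⟩
  -- `F k` mentions only variables below `N`, where `e'` and the limit agree.
  let N := (F k).freeVarFinset.toRight.sup id + 1
  obtain ⟨e', he', hk⟩ := hE N {k}
  refine (realize_iff_of_eqOn_freeVarFinset ?_).1 (hk k (Finset.mem_singleton_self k))
  rintro (d | i) hi
  · rfl
  · have hiN : i < N := Nat.lt_succ_of_le (Finset.le_sup (f := id) (Finset.mem_toRight.2 hi))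
    exact (he' i hiN).trans (hE_eq N i hiN)

theorem exists_forall_realize_countable {V : Type*} [Countable V] (F : ι → L.Formula (δ ⊕ V))
    (hF : ∀ t : Finset ι, ∃ e : V → C, ∀ k ∈ t, (F k).Realize (Sum.elim q e)) :
    ∃ e : V → C, ∀ k, (F k).Realize (Sum.elim q e) := by
  obtain ⟨f, hf⟩ := Countable.exists_injective_nat V
  have hrel : ∀ k (e : ℕ → C), ((F k).relabel (Sum.map id f)).Realize (Sum.elim q e) ↔
      (F k).Realize (Sum.elim q (e ∘ f)) := by
    simp [Formula.realize_relabel, Sum.elim_comp_map]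
  obtain ⟨e, he⟩ := hsat.exists_forall_realize_nat q (fun k => (F k).relabel (Sum.map id f))
    fun t => by
      obtain ⟨e, he⟩ := hF t
      refine ⟨Function.extend f e fun _ => Classical.arbitrary C, fun k hk => (hrel k _).2 ?_⟩
      rw [Function.extend_comp hf]
      exact he k hk
  exact ⟨e ∘ f, fun k => (hrel k e).1 (he k)⟩

end IsSaturatedIn

section Ladder

variable {L : Language} {C : Type*} [L.Structure C] {α β : Type} (φ : L.Formula (α ⊕ β))

def IsLadderRung (b : β → C) (x : ℕ → α → C) (y : ℕ → β → C) (i j : ℕ) : Prop :=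
  φ.Realize (Sum.elim (x i) b) ∧ (φ.Realize (Sum.elim (x i) (y j)) ↔ j ≤ i)

theorem isLadderRung_of_realize_iff_lt {u : ℕ → α → C} {v : ℕ → β → C}
    (huv : ∀ k l, 1 ≤ l → (φ.Realize (Sum.elim (u k) (v l)) ↔ k < l)) {n i j : ℕ}
    (hi : i ≤ n) (hj : j ≤ n) :
    IsLadderRung φ (v (n + 1)) (fun i => u (n - i)) (fun j => v (n - j + 1)) i j :=
  ⟨(huv _ _ (by omega)).2 (by omega), by rw [huv _ _ (by omega)]; omega⟩

theorem unstableSet_of_isLadderRung [Finite β] {b : β → C} {x : ℕ → α → C} {y : ℕ → β → C}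
    (h : ∀ i j, IsLadderRung φ b x y i j) : UnstableSet L {v | φ.Realize (Sum.elim v b)} := by
  obtain ⟨m, ⟨e⟩⟩ := Finite.exists_equiv_fin β
  refine ⟨m, (φ.relabel (Sum.map id e)).not, x, fun j => y j ∘ e.symm, fun i => (h i 0).1,
    fun i j => ?_⟩
  simp [Formula.realize_relabel, Sum.elim_comp_map, Function.comp_assoc, (h i j).2]

def rungFormula (i j : ℕ) : L.Formula (β ⊕ ((ℕ × α) ⊕ (ℕ × β))) :=
  φ.relabel (Sum.elim (fun a => .inr (.inl (i, a))) .inl) ⊓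
    (φ.relabel (Sum.elim (fun a => .inr (.inl (i, a))) fun c => .inr (.inr (j, c)))).iff
      (if j ≤ i then ⊤ else ⊥)

theorem realize_rungFormula (b : β → C) (e : (ℕ × α) ⊕ (ℕ × β) → C) (i j : ℕ) :
    (rungFormula φ i j).Realize (Sum.elim b e) ↔
      IsLadderRung φ b (Function.curry (e ∘ .inl)) (Function.curry (e ∘ .inr)) i j := by
  have hb : Sum.elim b e ∘ Sum.elim (fun a => .inr (.inl (i, a))) .inl =
      Sum.elim (Function.curry (e ∘ .inl) i) b := by
    ext (a | c) <;> rfl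
  have hy : Sum.elim b e ∘ Sum.elim (fun a => .inr (.inl (i, a))) (fun c => .inr (.inr (j, c))) =
      Sum.elim (Function.curry (e ∘ .inl) i) (Function.curry (e ∘ .inr) j) := by
    ext (a | c) <;> rfl
  have hle : (if j ≤ i then ⊤ else ⊥ : L.Formula (β ⊕ ((ℕ × α) ⊕ (ℕ × β)))).Realize
      (Sum.elim b e) ↔ j ≤ i := by
    split_ifs with h <;> simp [h]
  rw [rungFormula, Formula.realize_inf, Formula.realize_iff, Formula.realize_relabel,
    Formula.realize_relabel, hb, hy, hle, IsLadderRung]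

noncomputable def ladderFormula [DecidableEq α] [DecidableEq β] (n : ℕ) : L.Formula β :=
  exClosureRight (Formula.iInf fun p : Fin n × Fin n => rungFormula φ p.1 p.2)

variable [Nonempty C]

theorem realize_ladderFormula [DecidableEq α] [DecidableEq β] (b : β → C) (n : ℕ) :
    (ladderFormula φ n).Realize b ↔
      ∃ x y, ∀ i < n, ∀ j < n, IsLadderRung φ b x y i j := by
  simp only [ladderFormula, realize_exClosureRight, Formula.realize_iInf, realize_rungFormula]
  constructor
  · rintro ⟨e, he⟩
    exact ⟨_, _, fun i hi j hj => he (⟨i, hi⟩, ⟨j, hj⟩)⟩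
  · rintro ⟨x, y, h⟩
    exact ⟨Sum.elim (Function.uncurry x) (Function.uncurry y), fun p => by
      simpa using h p.1 p.1.2 p.2 p.2.2⟩

theorem realize_ladderFormula_of_forall_formulaHasOP [DecidableEq α] [DecidableEq β]
    {b : β → C} (hOP : ∀ θ : L.Formula β, θ.Realize b →
      FormulaHasOP (C := C) (φ ⊓ θ.relabel .inr)) (n : ℕ) :
    (ladderFormula φ n).Realize b := by
  by_contra hb
  obtain ⟨u, v, huv⟩ := hOP _ (Formula.realize_not.2 hb)
  have hv : ∀ l, 1 ≤ l → ¬ (ladderFormula φ n).Realize (v l) := fun l hl => by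
    simpa [Formula.realize_relabel] using (Formula.realize_inf.1 ((huv 0 l).2 hl)).2
  have huv' : ∀ k l, 1 ≤ l → (φ.Realize (Sum.elim (u k) (v l)) ↔ k < l) := fun k l hl => by
    simpa [Formula.realize_relabel, hv l hl] using huv k l
  exact hv (n + 1) (by omega) ((realize_ladderFormula φ _ n).2
    ⟨_, _, fun i hi j hj => isLadderRung_of_realize_iff_lt φ huv' hi.le hj.le⟩)

end Ladder

theorem exists_isLadderRung_of_saturated {L : Language} {C : Type u} [L.Structure C] [Infinite C]
    (hsat : IsSaturatedIn L C #C) {α β : Type} [Finite α] [Finite β] (φ : L.Formula (α ⊕ β))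
    (b : β → C) (hfin : ∀ n, ∃ x y, ∀ i < n, ∀ j < n, IsLadderRung φ b x y i j) :
    ∃ x y, ∀ i j, IsLadderRung φ b x y i j := by
  obtain ⟨e, he⟩ := hsat.exists_forall_realize_countable b
    (fun p : ℕ × ℕ => rungFormula φ p.1 p.2) fun t => by
      obtain ⟨x, y, h⟩ := hfin (t.sup (fun p => max p.1 p.2) + 1)
      refine ⟨Sum.elim (Function.uncurry x) (Function.uncurry y), fun p hp => ?_⟩
      have := Finset.le_sup (f := fun p : ℕ × ℕ => max p.1 p.2) hp
      simpa [realize_rungFormula] using h p.1 (by omega) p.2 (by omega)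
  exact ⟨_, _, fun i j => (realize_rungFormula φ b e i j).1 (he (i, j))⟩

theorem exists_not_formulaHasOP_of_finite {L : Language} {C : Type u} [L.Structure C]
    [Infinite C] (hsat : IsSaturatedIn L C #C) {α β : Type} [Finite α] [Finite β]
    (φ : L.Formula (α ⊕ β)) (b : β → C)
    (hstable : ¬ UnstableSet L {v : α → C | φ.Realize (Sum.elim v b)}) :
    ∃ θ : L.Formula β, θ.Realize b ∧ ¬ FormulaHasOP (C := C) (φ ⊓ θ.relabel .inr) := by
  classical
  by_contra! hOP
  obtain ⟨x, y, h⟩ := exists_isLadderRung_of_saturated hsat φ b fun n =>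
    (realize_ladderFormula φ b n).1 (realize_ladderFormula_of_forall_formulaHasOP φ hOP n)
  exact hstable (unstableSet_of_isLadderRung φ h)

section Restriction

variable {L : Language} {C : Type*} [L.Structure C] {α β : Type}

theorem FormulaHasOP.infinite {φ : L.Formula (α ⊕ β)} (h : FormulaHasOP (C := C) φ) :
    Infinite (α → C) := by
  obtain ⟨a, b, h⟩ := h
  refine Infinite.of_injective a fun i i' hii' => ?_
  have key : ∀ j, i < j ↔ i' < j := fun j => (h i j).symm.trans (hii' ▸ h i' j)
  have := (key (i + 1)).1 i.lt_succ_self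
  have := (key (i' + 1)).2 i'.lt_succ_self
  omega

variable [DecidableEq α] [DecidableEq β] (φ : L.Formula (α ⊕ β))

theorem unstableSet_of_restrictFreeVarSum [Nonempty C] (b : β → C)
    (h : UnstableSet L {v | (restrictFreeVarSum φ).Realize (Sum.elim v (b ∘ (↑)))}) :
    UnstableSet L {v | φ.Realize (Sum.elim v b)} := by
  obtain ⟨m, ψ, a, c, ha, hψ⟩ := h
  let a' : ℕ → α → C := fun i => Function.extend (↑) (a i) fun _ => Classical.arbitrary C
  have ha' : ∀ i, a' i ∘ (↑) = a i := fun i => Function.extend_comp Subtype.val_injective _ _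
  refine ⟨m, ψ.relabel (Sum.map (↑) id), a', c, fun i => ?_, fun i j => ?_⟩
  · have := ha i
    rwa [← ha' i, Set.mem_ofPred_eq, realize_restrictFreeVarSum] at this
  · rw [Formula.realize_relabel, Sum.elim_comp_map, ha' i, Function.comp_id]
    exact hψ i j

theorem formulaHasOP_restrictFreeVarSum (θ : L.Formula φ.freeVarFinset.toRight)
    (h : FormulaHasOP (C := C) (φ ⊓ (θ.relabel (↑)).relabel .inr)) :
    FormulaHasOP (C := C) (restrictFreeVarSum φ ⊓ θ.relabel .inr) := by
  obtain ⟨a, b, h⟩ := h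
  refine ⟨fun i => a i ∘ (↑), fun j => b j ∘ (↑), fun i j => ?_⟩
  rw [← h i j]
  simp [Formula.realize_relabel, realize_restrictFreeVarSum]

end Restriction

end OMinPaper

theorem statement_18_general
    {L : FirstOrder.Language.{v, w}} {C : Type u} [L.Structure C]
    (hmon : IsMonster L C)
    {α β : Type} (φ : L.Formula (α ⊕ β)) (b : β → C)
    (hstable : ¬ UnstableSet L {v : α → C | φ.Realize (Sum.elim v b)}) :
    ∃ θ : L.Formula β, θ.Realize b ∧
      ¬ FormulaHasOP (C := C) (φ ⊓ θ.relabel Sum.inr) := by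
  classical
  obtain ⟨θ, hθb, hθ⟩ : ∃ θ : L.Formula φ.freeVarFinset.toRight, θ.Realize (b ∘ (↑)) ∧
      ¬ FormulaHasOP (C := C) (restrictFreeVarSum φ ⊓ θ.relabel .inr) := by
    rcases finite_or_infinite C with hC | hC
    · exact ⟨⊤, by simp, fun h => not_finite_iff_infinite.2 h.infinite inferInstance⟩
    · exact exists_not_formulaHasOP_of_finite hmon.1 _ _ fun h =>
        hstable (unstableSet_of_restrictFreeVarSum φ b h)
  exact ⟨θ.relabel (↑), by simpa [Formula.realize_relabel] using hθb,
    fun h => hθ (formulaHasOP_restrictFreeVarSum φ θ h)⟩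

/-- Work in a monster model of a dependent theory.  If `φ(x,b)` defines a
stable set, then there is `θ(y) ∈ tp(b/∅)` such that `φ(x,y) ∧ θ(y)` has NOP. -/
theorem statement_18
    {L : FirstOrder.Language.{v, w}} {C : Type u} [L.Structure C]
    (hmon : IsMonster L C) (hdep : IsDependent L C)
    {α β : Type} (φ : L.Formula (α ⊕ β)) (b : β → C)
    (hstable : ¬ UnstableSet L {v : α → C | φ.Realize (Sum.elim v b)}) :
    ∃ θ : L.Formula β, θ.Realize b ∧
      ¬ FormulaHasOP (C := C) (φ ⊓ θ.relabel Sum.inr) :=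
  statement_18_general hmon φ b hstable
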